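/- arXiv:2402.18675 — 7 statements merged into one kernel-verified Lean document; each statement's English description precedes it below -/
import Mathlib

section
/- The heterogeneous dependency matrix D(par, σ) of any heterogeneous out-tree (par, σ) has no two equal rows and no two equal columns. -/
/-- Iterate the parent function `k` times starting from node `i`. -/
def parIter {N : ℕ} (par : Fin N → Option (Fin N)) : ℕ → Fin N → Option (Fin N)
  | 0, i => some i
  | k + 1, i => (par i).bind (parIter par k)

/-- `a` is an ancestor of `i`: `a` is reached from `i` by iterating `par` at least once. -/
def IsAncestor {N : ℕ} (par : Fin N → Option (Fin N)) (a i : Fin N) : Prop :=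
  ∃ k : ℕ, 0 < k ∧ parIter par k i = some a

/-- `par` is a well-founded parent function. -/
def WFParent {N : ℕ} (par : Fin N → Option (Fin N)) : Prop :=
  WellFounded (fun a i : Fin N => par i = some a)

open Classical in
/-- The heterogeneous dependency matrix of the heterogeneous out-tree `(par, σ)`:
`D i j = 1` iff `σ⁻¹ j` equals `i` or is an ancestor of `i`. -/
noncomputable def depMatrix {N : ℕ} (par : Fin N → Option (Fin N)) (σ : Equiv.Perm (Fin N)) :
    Fin N → Fin N → Bool :=
  fun i j => decide (σ.symm j = i ∨ IsAncestor par (σ.symm j) i)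

/-- The depth of node `i`: the least `k ≥ 1` with `parIter par k i = none`. -/
noncomputable def treeDepth {N : ℕ} (par : Fin N → Option (Fin N)) (i : Fin N) : ℕ :=
  sInf {k : ℕ | 1 ≤ k ∧ parIter par k i = none}

/-- Node `i` is a leaf: no node has `i` as its parent. -/
def IsLeaf {N : ℕ} (par : Fin N → Option (Fin N)) (i : Fin N) : Prop :=
  ∀ x, par x ≠ some i

/-- Tree dilation `di^{i→j}`: replace `par i` by `some j`. -/
def treeDilate {N : ℕ} (par : Fin N → Option (Fin N)) (i j : Fin N) :
    Fin N → Option (Fin N) :=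
  Function.update par i (some j)

/-- Tree absorption `ab^{j→i}`: replace `par i` by `none`. -/
def treeAbsorb {N : ℕ} (par : Fin N → Option (Fin N)) (i : Fin N) :
    Fin N → Option (Fin N) :=
  Function.update par i none

/-- Applicability of tree dilation `di^{i→j}`. -/
def DilateOK {N : ℕ} (par : Fin N → Option (Fin N)) (i j : Fin N) : Prop :=
  par i = none ∧ j ≠ i ∧ ¬ IsAncestor par i j

/-- Applicability of tree absorption `ab^{j→i}`. -/
def AbsorbOK {N : ℕ} (par : Fin N → Option (Fin N)) (i j : Fin N) : Prop :=
  IsLeaf par i ∧ par i = some j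

/-- Number of ones in a binary row. -/
def onesCount {N : ℕ} (r : Fin N → Bool) : ℕ :=
  (Finset.univ.filter fun c => r c = true).card

/-- Entrywise XOR of two rows. -/
def rowXor {N : ℕ} (r s : Fin N → Bool) : Fin N → Bool :=
  fun c => xor (r c) (s c)

/-- Replace row `i` of `S` by the XOR of rows `i` and `j`. -/
def matUpdateXor {K N : ℕ} (S : Fin K → Fin N → Bool) (i j : Fin K) :
    Fin K → Fin N → Bool :=
  Function.update S i (rowXor (S i) (S j))

/-- Applicability of matrix absorption `ab^{j→i}`. -/
def MatAbsorbOK {K N : ℕ} (S : Fin K → Fin N → Bool) (i j : Fin K) : Prop :=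
  onesCount (rowXor (S i) (S j)) = 1 ∧ onesCount (S j) < onesCount (S i)

/-- Applicability of matrix dilation `di^{i→j}`. -/
def MatDilateOK {K N : ℕ} (S : Fin K → Fin N → Bool) (i j : Fin K) : Prop :=
  onesCount (S i) = 1 ∧ ∀ c, ¬ (S i c = true ∧ S j c = true)

/-- A permutation matrix: exactly one `1` in each row and each column. -/
def IsPermMatrix {N : ℕ} (S : Fin N → Fin N → Bool) : Prop :=
  (∀ i, ∃! j, S i j = true) ∧ (∀ j, ∃! i, S i j = true)

/-- Column set `S_c` of column `c`. -/
def colSet {K N : ℕ} (D : Fin K → Fin N → Bool) (c : Fin N) : Set (Fin K) :=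
  {r | D r c = true}

/-- Unique element set `J_{S_c}`: `S_c` minus the union of all column sets that are
proper subsets of `S_c`. -/
def JSet {K N : ℕ} (D : Fin K → Fin N → Bool) (c : Fin N) : Set (Fin K) :=
  {r | r ∈ colSet D c ∧ ∀ c' : Fin N, colSet D c' ⊂ colSet D c → r ∉ colSet D c'}

/-- `1°`: no row is all-zero. -/
def Cond1 {K N : ℕ} (D : Fin K → Fin N → Bool) : Prop :=
  ∀ r, ∃ c, D r c = true

/-- `2°`: no column is all-zero. -/
def Cond2 {K N : ℕ} (D : Fin K → Fin N → Bool) : Prop :=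
  ∀ c, ∃ r, D r c = true

/-- `3°`: no two distinct rows are equal. -/
def Cond3 {K N : ℕ} (D : Fin K → Fin N → Bool) : Prop :=
  ∀ r₁ r₂, (∀ c, D r₁ c = D r₂ c) → r₁ = r₂

/-- `4°`: no two distinct columns are equal. -/
def Cond4 {K N : ℕ} (D : Fin K → Fin N → Bool) : Prop :=
  ∀ c₁ c₂, (∀ r, D r c₁ = D r c₂) → c₁ = c₂

/-- `5°`: any two column sets are nested or disjoint. -/
def Cond5 {K N : ℕ} (D : Fin K → Fin N → Bool) : Prop :=
  ∀ c₁ c₂, colSet D c₁ ⊆ colSet D c₂ ∨ colSet D c₂ ⊆ colSet D c₁ ∨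
    colSet D c₁ ∩ colSet D c₂ = ∅

/-- `6°`: every unique element set has exactly one element. -/
def Cond6 {K N : ℕ} (D : Fin K → Fin N → Bool) : Prop :=
  ∀ c, ∃! r, r ∈ JSet D c

/-- Condition set `P = {1°, 2°, 3°, 4°, 5°}`. -/
def CondP {K N : ℕ} (D : Fin K → Fin N → Bool) : Prop :=
  Cond1 D ∧ Cond2 D ∧ Cond3 D ∧ Cond4 D ∧ Cond5 D

/-- Condition set `P⁻ = {1°, 3°, 5°}`. -/
def CondPminus {K N : ℕ} (D : Fin K → Fin N → Bool) : Prop :=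
  Cond1 D ∧ Cond3 D ∧ Cond5 D

/-- One step of matrix absorption or matrix dilation. -/
def MatStep {N : ℕ} (S T : Fin N → Fin N → Bool) : Prop :=
  ∃ i j, (MatAbsorbOK S i j ∨ MatDilateOK S i j) ∧ T = matUpdateXor S i j

/-
Row `i` has a one in column `σ i`, and column `j` has a one in row `σ⁻¹ j`. So two equal rows
`i₁, i₂` (or two equal columns, read through `σ⁻¹`) give nodes each of which is equal to or an
ancestor of the other; well-foundedness of `par` rules out a node being its own ancestor.
-/

section

variable {N : ℕ} {par : Fin N → Option (Fin N)}

lemma reflTransGen_of_parIter_eq_some {a i : Fin N} {k : ℕ} (h : parIter par k i = some a) :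
    Relation.ReflTransGen (fun a i => par i = some a) a i := by
  induction k generalizing i with
  | zero =>
    cases h
    exact .refl
  | succ k ih =>
    obtain ⟨b, hb, hba⟩ := Option.bind_eq_some_iff.mp h
    exact (ih hba).tail hb

lemma IsAncestor.transGen {a i : Fin N} (h : IsAncestor par a i) :
    Relation.TransGen (fun a i => par i = some a) a i := by
  obtain ⟨_ | k, hk, hki⟩ := h
  · exact absurd hk (lt_irrefl 0)
  obtain ⟨b, hb, hba⟩ := Option.bind_eq_some_iff.mp hki
  exact .tail' (reflTransGen_of_parIter_eq_some hba) hb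

lemma eq_of_eq_or_isAncestor_of_eq_or_isAncestor (hwf : WFParent par) {a b : Fin N}
    (hab : a = b ∨ IsAncestor par a b) (hba : b = a ∨ IsAncestor par b a) : a = b := by
  rcases hab with rfl | hab
  · rfl
  rcases hba with rfl | hba
  · rfl
  exact absurd (hab.transGen.trans hba.transGen) (hwf.transGen.irrefl.irrefl a)

end

lemma depMatrix_eq_true_iff {N : ℕ} {par : Fin N → Option (Fin N)} {σ : Equiv.Perm (Fin N)}
    {i j : Fin N} :
    depMatrix par σ i j = true ↔ σ.symm j = i ∨ IsAncestor par (σ.symm j) i := by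
  simp [depMatrix]

/-- The heterogeneous dependency matrix of any heterogeneous out-tree
`(par, σ)` has no two equal rows and no two equal columns. -/
theorem depMatrix_rows_cols_nodup {N : ℕ} (par : Fin N → Option (Fin N))
    (σ : Equiv.Perm (Fin N)) (hwf : WFParent par) :
    (∀ i₁ i₂ : Fin N, (∀ j, depMatrix par σ i₁ j = depMatrix par σ i₂ j) → i₁ = i₂) ∧
    (∀ j₁ j₂ : Fin N, (∀ i, depMatrix par σ i j₁ = depMatrix par σ i j₂) → j₁ = j₂) := by
  have diag {i j : Fin N} (h : σ.symm j = i) : depMatrix par σ i j = true :=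
    depMatrix_eq_true_iff.mpr (.inl h)
  refine ⟨fun i₁ i₂ h => ?_, fun j₁ j₂ h => σ.symm.injective ?_⟩
  · have h₁ := depMatrix_eq_true_iff.mp ((h (σ i₁)).symm.trans (diag (σ.symm_apply_apply i₁)))
    have h₂ := depMatrix_eq_true_iff.mp ((h (σ i₂)).trans (diag (σ.symm_apply_apply i₂)))
    simp only [Equiv.symm_apply_apply] at h₁ h₂
    exact eq_of_eq_or_isAncestor_of_eq_or_isAncestor hwf h₁ h₂
  · have h₁ := depMatrix_eq_true_iff.mp ((h (σ.symm j₂)).trans (diag rfl))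
    have h₂ := depMatrix_eq_true_iff.mp ((h (σ.symm j₁)).symm.trans (diag rfl))
    exact eq_of_eq_or_isAncestor_of_eq_or_isAncestor hwf h₁ h₂
end

section
/- For N ≥ 1, the number of heterogeneous out-trees with N non-root nodes and N labeled edges, i.e., the cardinality of the set of pairs (par, σ) where par : Fin N → Option (Fin N) is a well-founded parent function and σ : Fin N → Fin N is a bijection, equals (N+1)^(N−1) · N!. -/
/-!
Pitman's double counting. Write `T k` for the number of rooted forests on a type with `n`
elements that have `k` edges, i.e. parent functions `f : α → Option α` without cycles and with
`k` nodes having a parent. Adding an edge `u ↦ v` to such a forest keeps it acyclic exactly when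
`u` is a root and `v` is not a descendant of `u`; the trees partition `α`, so this can be done in
`n (n - k) - n` ways. Conversely each forest with `k + 1` edges arises from exactly `k + 1`
forests with `k` edges. Hence `(k + 1) T (k + 1) = n (n - 1 - k) T k`, so
`T k = (n - 1).choose k * n ^ k`, and summing over `k` gives `(n + 1) ^ (n - 1)`.
-/

theorem Nat.sum_range_succ_choose_pred_mul_pow (n : ℕ) :
    ∑ k ∈ Finset.range (n + 1), (n - 1).choose k * n ^ k = (n + 1) ^ (n - 1) := by
  cases n with
  | zero => simp
  | succ n =>
    rw [Nat.add_sub_cancel, Finset.sum_range_succ, Nat.choose_succ_self, zero_mul, add_zero,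
      add_pow]
    simp [mul_comm]

namespace ParentFun

open Finset Function Relation
open scoped Classical

variable {α : Type*}

def Reaches (f : α → Option α) : α → α → Prop :=
  ReflTransGen fun x y => f x = some y

theorem existsUnique_root_reaches {f : α → Option α}
    (hf : WellFounded fun a i => f i = some a) (v : α) :
    ∃! r, f r = none ∧ Reaches f v r := by
  have eq_of_reaches_of_root : ∀ r, f r = none → ∀ s, Reaches f r s → s = r :=
    fun r hr s hrs => by
      rcases ReflTransGen.cases_head hrs with rfl | ⟨c, hrc, -⟩
      · rfl
      · simp [hr] at hrc
  obtain ⟨r, hr, hvr⟩ : ∃ r, f r = none ∧ Reaches f v r := by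
    induction v using hf.induction with
    | _ v ih =>
      cases hv : f v with
      | none => exact ⟨v, hv, .refl⟩
      | some a =>
        obtain ⟨r, hr, har⟩ := ih a hv
        exact ⟨r, hr, .head hv har⟩
  refine ⟨r, ⟨hr, hvr⟩, fun s ⟨hs, hvs⟩ => ?_⟩
  have right_unique : Relator.RightUnique fun x y => f x = some y :=
    fun _ _ _ hb hc => Option.some_injective _ (hb.symm.trans hc)
  rcases hvr.total_of_right_unique right_unique hvs with hrs | hsr
  · exact eq_of_reaches_of_root r hr s hrs
  · exact (eq_of_reaches_of_root s hs r hsr).symm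

theorem wellFounded_update_none {f : α → Option α} (hf : WellFounded fun a i => f i = some a)
    (u : α) : WellFounded fun a i => update f u none i = some a :=
  Subrelation.wf (fun {a i} h => by
    rcases eq_or_ne i u with rfl | hi
    · simp at h
    · rwa [update_of_ne hi] at h) hf

theorem wellFounded_update_some_iff {f : α → Option α}
    (hf : WellFounded fun a i => f i = some a) {u : α} (hu : f u = none) (v : α) :
    (WellFounded fun a i => update f u (some v) i = some a) ↔ ¬ Reaches f v u := by
  set g := update f u (some v)
  have hg_of_ne : ∀ {x}, x ≠ u → g x = f x := fun hx => update_of_ne hx _ _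
  constructor
  · intro hg hvu
    have hfg : ∀ x y, f x = some y → g x = some y := fun x y h => by
      rwa [hg_of_ne (by rintro rfl; simp [hu] at h)]
    have cycle : TransGen (fun x y => g x = some y) u u :=
      .head' (update_self ..) (ReflTransGen.mono hfg _ _ hvu)
    exact hg.transGen.irrefl.irrefl u (transGen_swap.mpr cycle)
  · intro hvu
    have acc_of_not_reaches : ∀ y, ¬ Reaches f y u → Acc (fun a i => g i = some a) y := by
      intro y
      induction y using hf.induction with
      | _ y ih =>
        intro hyu
        have hy : y ≠ u := by rintro rfl; exact hyu .refl
        refine ⟨_, fun a hya => ?_⟩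
        rw [hg_of_ne hy] at hya
        exact ih a hya fun hau => hyu (.head hya hau)
    have acc_u : Acc (fun a i => g i = some a) u :=
      ⟨_, fun a ha => by
        obtain rfl : v = a := Option.some_injective _ ((update_self u (some v) f).symm.trans ha)
        exact acc_of_not_reaches v hvu⟩
    refine ⟨fun x => ?_⟩
    induction x using hf.induction with
    | _ x ih =>
      rcases eq_or_ne x u with rfl | hx
      · exact acc_u
      · exact ⟨_, fun a ha => ih a (by rwa [hg_of_ne hx] at ha)⟩

variable [Fintype α]

noncomputable def edgeCount (f : α → Option α) : ℕ :=
  #{x | f x ≠ none}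

theorem card_roots (f : α → Option α) : #{x | f x = none} = Fintype.card α - edgeCount f := by
  have := card_filter_add_card_filter_not (s := univ) (fun x => f x = none)
  simp only [edgeCount, ne_eq, card_univ] at this ⊢
  omega

theorem edgeCount_update_some {f : α → Option α} {u : α} (hu : f u = none) (v : α) :
    edgeCount (update f u (some v)) = edgeCount f + 1 := by
  have : Finset.filter (fun x => update f u (some v) x ≠ none) univ =
      insert u (Finset.filter (fun x => f x ≠ none) univ) := by
    ext x
    rcases eq_or_ne x u with rfl | hx <;> simp [*]
  rw [edgeCount, this, card_insert_of_notMem (by simp [hu]), edgeCount]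

theorem edgeCount_update_none {g : α → Option α} {u : α} (hu : g u ≠ none) :
    edgeCount (update g u none) + 1 = edgeCount g := by
  have : Finset.filter (fun x => update g u none x ≠ none) univ =
      (Finset.filter (fun x => g x ≠ none) univ).erase u := by
    ext x
    rcases eq_or_ne x u with rfl | hx <;> simp [*]
  rw [edgeCount, this, card_erase_add_one (by simpa using hu), edgeCount]

theorem card_root_reaches {f : α → Option α} (hf : WellFounded fun a i => f i = some a) :
    #{p : α × α | f p.1 = none ∧ Reaches f p.2 p.1} = Fintype.card α := by
  rw [card_filter, Fintype.sum_prod_type_right, ← card_univ, card_eq_sum_ones]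
  refine sum_congr rfl fun v _ => ?_
  obtain ⟨r, hr, hr_unique⟩ := existsUnique_root_reaches hf v
  rw [← card_filter, card_eq_one]
  exact ⟨r, eq_singleton_iff_unique_mem.mpr
    ⟨by simpa using hr, fun s hs => hr_unique s (by simpa using hs)⟩⟩

theorem card_root_not_reaches {f : α → Option α} (hf : WellFounded fun a i => f i = some a) :
    #{p : α × α | f p.1 = none ∧ ¬ Reaches f p.2 p.1} =
      Fintype.card α * (Fintype.card α - 1 - edgeCount f) := by
  have hroots : #{p : α × α | f p.1 = none} =
      (Fintype.card α - edgeCount f) * Fintype.card α := by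
    rw [← card_roots, ← Finset.card_univ (α := α), ← card_product]
    congr 1
    ext p
    simp
  have hsplit := card_filter_add_card_filter_not (s := {p : α × α | f p.1 = none})
    (fun p => Reaches f p.2 p.1)
  simp only [filter_filter] at hsplit
  rw [card_root_reaches hf, hroots] at hsplit
  rw [Nat.sub_right_comm, Nat.mul_sub_one, Nat.mul_comm]
  omega

variable (α) in
noncomputable def forestsWithEdges (k : ℕ) : Finset (α → Option α) :=
  {f | (WellFounded fun a i => f i = some a) ∧ edgeCount f = k}

theorem forestsWithEdges_zero : forestsWithEdges α 0 = {fun _ => none} := by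
  ext f
  simp only [forestsWithEdges, mem_filter, mem_univ, true_and, mem_singleton, edgeCount,
    card_eq_zero, filter_eq_empty_iff, not_not]
  constructor
  · exact fun h => funext fun x => h.2 trivial
  · rintro rfl
    exact ⟨⟨fun i => ⟨i, fun a h => by simp at h⟩⟩, fun _ _ => rfl⟩

theorem mem_forestsWithEdges {k : ℕ} {f : α → Option α} :
    f ∈ forestsWithEdges α k ↔ (WellFounded fun a i => f i = some a) ∧ edgeCount f = k := by
  simp [forestsWithEdges]

theorem card_forestsWithEdges_succ_deleting {k : ℕ} {f : α → Option α}
    (hf : f ∈ forestsWithEdges α k) :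
    #{g ∈ forestsWithEdges α (k + 1) | ∃ u, g u ≠ none ∧ f = update g u none} =
      Fintype.card α * (Fintype.card α - 1 - k) := by
  rw [mem_forestsWithEdges] at hf
  rw [← hf.2, ← card_root_not_reaches hf.1,
    ← card_image_of_injOn (f := fun p : α × α => update f p.1 (some p.2))]
  · congr 1
    ext g
    simp only [mem_filter, mem_forestsWithEdges, mem_univ, true_and, mem_image]
    constructor
    · rintro ⟨⟨hg, -⟩, u, hu, rfl⟩
      obtain ⟨v, hv⟩ := Option.ne_none_iff_exists'.mp hu
      refine ⟨(u, v), ⟨update_self .., ?_⟩, by simp [← hv]⟩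
      rw [← wellFounded_update_some_iff (wellFounded_update_none hg u) (update_self ..)]
      simpa [← hv] using hg
    · rintro ⟨⟨u, v⟩, ⟨hu, hvu⟩, rfl⟩
      refine ⟨⟨(wellFounded_update_some_iff hf.1 hu v).mpr hvu, ?_⟩, u, by simp,
        by simp [← hu]⟩
      rw [edgeCount_update_some hu, hf.2]
  · rintro ⟨u, v⟩ hu ⟨u', v'⟩ - h
    simp only [coe_filter, mem_univ, true_and, Set.mem_ofPred_eq] at hu
    obtain rfl : u = u' := by
      by_contra hne
      simpa [update_of_ne hne, hu.1] using congrFun h u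
    simpa using congrFun h u

theorem card_forestsWithEdges_deleting {k : ℕ} {g : α → Option α}
    (hg : g ∈ forestsWithEdges α (k + 1)) :
    #{f ∈ forestsWithEdges α k | ∃ u, g u ≠ none ∧ f = update g u none} = k + 1 := by
  rw [mem_forestsWithEdges] at hg
  rw [← hg.2, edgeCount, ← card_image_of_injOn (f := fun u => update g u none)]
  · congr 1
    ext f
    simp only [mem_filter, mem_forestsWithEdges, mem_univ, true_and, mem_image]
    constructor
    · rintro ⟨-, u, hu, rfl⟩
      exact ⟨u, hu, rfl⟩
    · rintro ⟨u, hu, rfl⟩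
      refine ⟨⟨wellFounded_update_none hg.1 u, ?_⟩, u, hu, rfl⟩
      have := edgeCount_update_none hu
      omega
  · intro u hu u' _ h
    by_contra hne
    simp only [coe_filter, mem_univ, true_and, Set.mem_ofPred_eq] at hu
    exact hu (by simpa [update_of_ne hne] using (congrFun h u).symm)

theorem card_forestsWithEdges_succ_mul (k : ℕ) :
    #(forestsWithEdges α (k + 1)) * (k + 1) =
      #(forestsWithEdges α k) * (Fintype.card α * (Fintype.card α - 1 - k)) :=
  (card_mul_eq_card_mul (s := forestsWithEdges α k) (t := forestsWithEdges α (k + 1))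
    (fun f g : α → Option α => ∃ u, g u ≠ none ∧ f = update g u none)
    (fun _ hf => card_forestsWithEdges_succ_deleting hf)
    (fun _ hg => card_forestsWithEdges_deleting hg)).symm

theorem card_forestsWithEdges (k : ℕ) :
    #(forestsWithEdges α k) = (Fintype.card α - 1).choose k * Fintype.card α ^ k := by
  induction k with
  | zero => simp [forestsWithEdges_zero]
  | succ k ih =>
    apply Nat.eq_of_mul_eq_mul_right k.succ_pos
    rw [card_forestsWithEdges_succ_mul, ih, mul_right_comm _ _ (k + 1), Nat.choose_succ_right_eq]
    ring

theorem card_wellFounded :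
    Nat.card {f : α → Option α // WellFounded fun a i => f i = some a} =
      (Fintype.card α + 1) ^ (Fintype.card α - 1) := by
  rw [Nat.card_eq_fintype_card, Fintype.card_subtype,
    card_eq_sum_card_fiberwise (f := edgeCount) (t := range (Fintype.card α + 1))
      fun f _ => mem_range_succ_iff.mpr (card_filter_le _ _)]
  refine (sum_congr rfl fun k _ => ?_).trans (Nat.sum_range_succ_choose_pred_mul_pow _)
  rw [filter_filter, ← card_forestsWithEdges]
  rfl

end ParentFun

theorem card_heterogeneous_out_trees_general (N : ℕ) :
    Nat.card {t : (Fin N → Option (Fin N)) × Equiv.Perm (Fin N) // WFParent t.1} =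
      (N + 1) ^ (N - 1) * Nat.factorial N := by
  rw [Nat.card_congr Equiv.prodSubtypeFstEquivSubtypeProd, Nat.card_prod, Nat.card_perm]
  unfold WFParent
  rw [ParentFun.card_wellFounded, Fintype.card_fin, Nat.card_fin]

/-- There are `(N+1)^(N-1) · N!` heterogeneous out-trees with `N`
non-root nodes and `N` labeled edges. -/
theorem card_heterogeneous_out_trees (N : ℕ) (hN : 1 ≤ N) :
    Nat.card {t : (Fin N → Option (Fin N)) × Equiv.Perm (Fin N) // WFParent t.1} =
      (N + 1) ^ (N - 1) * Nat.factorial N :=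
  card_heterogeneous_out_trees_general N
end

section
/- Any heterogeneous out-tree t = (par, σ) can be transformed into the depth-1 tree (par ≡ none, σ) by a finite sequence of applicable tree absorption operations, and the original tree t can be reconstructed from the depth-1 tree by applying the corresponding tree dilation operations in reverse order. -/
/-! A well-founded forest with a non-root node has a non-root leaf: the descendant relation is the
converse of a well-founded strict order on a finite type, hence well-founded, and a non-root node
minimal for it has no children. Cutting such a leaf `i` off its parent `j` lowers the number of
non-root nodes, so repeated cuts reach the depth-1 tree. Afterwards `i` is a root without
children, so it is no ancestor of `j` and the dilation `di^{i→j}` that restores the cut applies. -/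

theorem exists_fin_walk_of_decreasing_step {α β : Type*} (P : α → Prop) (R : α → α → β → Prop)
    (μ : α → ℕ) (a₀ : α) (step : ∀ a, P a → a ≠ a₀ → ∃ b s, P b ∧ μ b < μ a ∧ R a b s)
    (a : α) (ha : P a) :
    ∃ (n : ℕ) (as : Fin (n + 1) → α) (ss : Fin n → β),
      as 0 = a ∧ as (Fin.last n) = a₀ ∧ ∀ k : Fin n, R (as k.castSucc) (as k.succ) (ss k) := by
  induction a using (measure μ).wf.induction with
  | h a ih =>
    by_cases h₀ : a = a₀
    · exact ⟨0, fun _ => a, Fin.elim0, rfl, h₀, fun k => k.elim0⟩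
    obtain ⟨b, s, hb, hμ, hR⟩ := step a ha h₀
    obtain ⟨n, as, ss, h0, hlast, hsteps⟩ := ih b hμ hb
    refine ⟨n + 1, Fin.cons a as, Fin.cons s ss, rfl, by simpa [← Fin.succ_last] using hlast, ?_⟩
    intro k
    cases k using Fin.cases with
    | zero => simpa [h0] using hR
    | succ k => simpa [← Fin.succ_castSucc] using hsteps k

section Tree

variable {N : ℕ} {par : Fin N → Option (Fin N)}

def nonRoots (par : Fin N → Option (Fin N)) : Finset (Fin N) :=
  Finset.univ.filter fun x => par x ≠ none

theorem IsLeaf.parIter_succ_ne {i : Fin N} (hi : IsLeaf par i) (k : ℕ) (x : Fin N) :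
    parIter par (k + 1) x ≠ some i := by
  induction k generalizing x with
  | zero => simpa [parIter] using hi x
  | succ k ih =>
    cases hx : par x with
    | none => simp [parIter, hx]
    | some y => simpa [parIter, hx] using ih y

theorem IsLeaf.not_isAncestor {i : Fin N} (hi : IsLeaf par i) (x : Fin N) :
    ¬ IsAncestor par i x := by
  rintro ⟨k, hk, hx⟩
  obtain ⟨k, rfl⟩ := Nat.exists_eq_succ_of_ne_zero hk.ne'
  exact hi.parIter_succ_ne k x hx

theorem treeAbsorb_eq_some {i x a : Fin N} (h : treeAbsorb par i x = some a) : par x = some a := by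
  by_cases hx : x = i
  · simp [treeAbsorb, hx] at h
  · rwa [treeAbsorb, Function.update_of_ne hx] at h

theorem WFParent.treeAbsorb (hwf : WFParent par) (i : Fin N) : WFParent (treeAbsorb par i) :=
  Subrelation.wf treeAbsorb_eq_some hwf

theorem card_nonRoots_treeAbsorb_lt {i : Fin N} (hi : par i ≠ none) :
    (nonRoots (treeAbsorb par i)).card < (nonRoots par).card := by
  have h : nonRoots (treeAbsorb par i) = (nonRoots par).erase i := by
    ext x
    by_cases hx : x = i <;> simp [nonRoots, treeAbsorb, Function.update_apply, hx]
  rw [h]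
  exact Finset.card_erase_lt_of_mem (by simpa [nonRoots] using hi)

theorem WFParent.exists_absorbOK (hwf : WFParent par) {x : Fin N} (hx : par x ≠ none) :
    ∃ i j, AbsorbOK par i j := by
  let ancestor := Relation.TransGen fun a i : Fin N => par i = some a
  have : Std.Irrefl (Function.swap ancestor) := ⟨hwf.transGen.irrefl.irrefl⟩
  have hdesc : WellFounded (Function.swap ancestor) := Finite.wellFounded_of_trans_of_irrefl _
  obtain ⟨i, hi, hmin⟩ := hdesc.has_min {y | par y ≠ none} ⟨x, hx⟩
  obtain ⟨j, hj⟩ := Option.ne_none_iff_exists'.mp hi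
  exact ⟨i, j, fun y hy => hmin y (by simp [hy]) (.single hy), hj⟩

theorem AbsorbOK.dilateOK_treeAbsorb {i j : Fin N} (h : AbsorbOK par i j) :
    DilateOK (treeAbsorb par i) i j := by
  obtain ⟨hleaf, hij⟩ := h
  refine ⟨Function.update_self _ _ _, ?_, IsLeaf.not_isAncestor ?_ j⟩
  · rintro rfl
    exact hleaf j hij
  · exact fun x hx => hleaf x (treeAbsorb_eq_some hx)

theorem AbsorbOK.treeDilate_treeAbsorb {i j : Fin N} (h : AbsorbOK par i j) :
    treeDilate (treeAbsorb par i) i j = par := by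
  rw [treeDilate, treeAbsorb, Function.update_idem, ← h.2, Function.update_eq_self]

end Tree

theorem tree_to_depth_one_by_absorption_general {N : ℕ} (par : Fin N → Option (Fin N))
    (hwf : WFParent par) :
    ∃ (n : ℕ) (ps : Fin (n + 1) → Fin N → Option (Fin N)) (steps : Fin n → Fin N × Fin N),
      ps 0 = par ∧
      ps (Fin.last n) = (fun _ => none) ∧
      (∀ k : Fin n,
        AbsorbOK (ps k.castSucc) (steps k).1 (steps k).2 ∧
        ps k.succ = treeAbsorb (ps k.castSucc) (steps k).1) ∧
      (∀ k : Fin n,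
        DilateOK (ps k.succ) (steps k).1 (steps k).2 ∧
        treeDilate (ps k.succ) (steps k).1 (steps k).2 = ps k.castSucc) := by
  have absorb_leaf : ∀ p, WFParent p → p ≠ (fun _ => none) →
      ∃ (q : Fin N → Option (Fin N)) (s : Fin N × Fin N),
      WFParent q ∧ (nonRoots q).card < (nonRoots p).card ∧
      (AbsorbOK p s.1 s.2 ∧ q = treeAbsorb p s.1) ∧
      (DilateOK q s.1 s.2 ∧ treeDilate q s.1 s.2 = p) := by
    intro p hp hne
    obtain ⟨x, hx⟩ := Function.ne_iff.mp hne
    obtain ⟨i, j, hij⟩ := hp.exists_absorbOK hx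
    exact ⟨treeAbsorb p i, (i, j), hp.treeAbsorb i, card_nonRoots_treeAbsorb_lt (by simp [hij.2]),
      ⟨hij, rfl⟩, hij.dilateOK_treeAbsorb, hij.treeDilate_treeAbsorb⟩
  obtain ⟨n, ps, steps, h0, hlast, hsteps⟩ :=
    exists_fin_walk_of_decreasing_step _ _ _ _ absorb_leaf par hwf
  exact ⟨n, ps, steps, h0, hlast, fun k => (hsteps k).1, fun k => (hsteps k).2⟩

/-- Any heterogeneous out-tree `(par, σ)` can be transformed into the
depth-1 tree by a finite sequence of applicable tree absorptions, and reconstructed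
from the depth-1 tree by the corresponding tree dilations in reverse order. -/
theorem tree_to_depth_one_by_absorption {N : ℕ} (par : Fin N → Option (Fin N))
    (σ : Equiv.Perm (Fin N)) (hwf : WFParent par) :
    ∃ (n : ℕ) (ps : Fin (n + 1) → Fin N → Option (Fin N)) (steps : Fin n → Fin N × Fin N),
      ps 0 = par ∧
      ps (Fin.last n) = (fun _ => none) ∧
      (∀ k : Fin n,
        AbsorbOK (ps k.castSucc) (steps k).1 (steps k).2 ∧
        ps k.succ = treeAbsorb (ps k.castSucc) (steps k).1) ∧
      (∀ k : Fin n,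
        DilateOK (ps k.succ) (steps k).1 (steps k).2 ∧
        treeDilate (ps k.succ) (steps k).1 (steps k).2 = ps k.castSucc) :=
  tree_to_depth_one_by_absorption_general par hwf
end

section
/- If a binary matrix D ∈ {0,1}^{n×n} satisfies conditions 1° and 5°, then for every row r of D there exists a column c such that r belongs to the unique element set J_{S_c}. -/
theorem exists_mem_JSet_of_mem_colSet {K N : ℕ} (D : Fin K → Fin N → Bool) {r : Fin K}
    {c₀ : Fin N} (hr : r ∈ colSet D c₀) : ∃ c, r ∈ JSet D c := by
  obtain ⟨c, hc, hmin⟩ :=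
    (InvImage.wf (colSet D) wellFounded_lt).has_min {c | r ∈ colSet D c} ⟨c₀, hr⟩
  exact ⟨c, hc, fun c' hsub hc' => hmin c' hc' hsub⟩

theorem row_mem_JSet_of_cond1_cond5_general {n : ℕ} (D : Fin n → Fin n → Bool)
    (h1 : Cond1 D) :
    ∀ r : Fin n, ∃ c : Fin n, r ∈ JSet D c :=
  fun r => exists_mem_JSet_of_mem_colSet D (h1 r).choose_spec

/-- If a binary `n × n` matrix satisfies conditions `1°` and `5°`,
then every row belongs to the unique element set of some column. -/
theorem row_mem_JSet_of_cond1_cond5 {n : ℕ} (D : Fin n → Fin n → Bool)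
    (h1 : Cond1 D) (h5 : Cond5 D) :
    ∀ r : Fin n, ∃ c : Fin n, r ∈ JSet D c :=
  row_mem_JSet_of_cond1_cond5_general D h1
end

section
/- If a K×N binary matrix D⁻ satisfies condition set P⁻ = {1°, 3°, 5°}, then for every column c of D⁻, the unique element set J_{S_c} contains at most one row: |J_{S_c}| ≤ 1. -/
/-! A row of `J_{S_c}` that lies in a column set `S_{c'}` forces `S_c ⊆ S_{c'}`: by 5° the two
sets are nested or disjoint, and `S_{c'} ⊂ S_c` is excluded by the definition of `J_{S_c}`.
Hence all rows of `J_{S_c}` lie in exactly the same column sets, i.e. they are equal as rows,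
and 3° leaves room for only one of them. -/

section UniqueElementSet

variable {K N : ℕ} {D : Fin K → Fin N → Bool}

theorem colSet_subset_of_mem_JSet (h5 : Cond5 D) {c c' : Fin N} {r : Fin K}
    (hr : r ∈ JSet D c) (hrc' : r ∈ colSet D c') : colSet D c ⊆ colSet D c' := by
  obtain ⟨hrc, hmin⟩ := hr
  rcases h5 c' c with hsub | hsup | hdisj
  · by_contra hne
    exact hmin c' (hsub.ssubset_of_ne fun heq => hne heq.ge) hrc'
  · exact hsup
  · exact absurd hdisj (Set.nonempty_iff_ne_empty.mp ⟨r, hrc', hrc⟩)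

theorem mem_colSet_iff_of_mem_JSet (h5 : Cond5 D) {c : Fin N} {r₁ r₂ : Fin K}
    (h₁ : r₁ ∈ JSet D c) (h₂ : r₂ ∈ JSet D c) (c' : Fin N) :
    r₁ ∈ colSet D c' ↔ r₂ ∈ colSet D c' :=
  ⟨fun h => colSet_subset_of_mem_JSet h5 h₁ h h₂.1,
    fun h => colSet_subset_of_mem_JSet h5 h₂ h h₁.1⟩

end UniqueElementSet

/-- If a `K × N` binary matrix satisfies `P⁻ = {1°, 3°, 5°}`, then
every unique element set contains at most one row. -/
theorem JSet_subsingleton_of_condPminus {K N : ℕ} (D : Fin K → Fin N → Bool)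
    (h : CondPminus D) :
    ∀ c : Fin N, (JSet D c).Subsingleton := by
  obtain ⟨-, h3, h5⟩ := h
  intro c r₁ h₁ r₂ h₂
  exact h3 r₁ r₂ fun c' => Bool.eq_iff_iff.mpr (mem_colSet_iff_of_mem_JSet h5 h₁ h₂ c')
end

section
/- For a binary matrix D ∈ {0,1}^{n×n}: D satisfies condition set P₀ = {1°, 2°, 5°, 6°} if and only if D satisfies condition set P = {1°, 2°, 3°, 4°, 5°}. -/
/-!
Every row `r` lies in the unique element set of a column `c` that is minimal among the columns
containing `r` (this needs only 1°). Under 5°, such an `r` lies in a column `c'` exactly when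
`S_c ⊆ S_{c'}`, so the row `r` is determined by `c`: with 3° each `J_{S_c}` has at most one
element, and under 6° two equal rows share their `J`-set and must coincide. Finally, a map
between the rows and the columns of a square matrix is a bijection as soon as it is injective or
surjective: sending each row to a column whose `J`-set contains it gives 6° from 1°, 3°, 5°, and
sending each column to its unique `J`-element gives 4° from 1° and 6°.
-/

section General

variable {K N : ℕ} {D : Fin K → Fin N → Bool}

lemma exists_mem_JSet_of_eq_true {r : Fin K} {c₀ : Fin N} (h : D r c₀ = true) :
    ∃ c, r ∈ JSet D c := by
  obtain ⟨c, hc, hmin⟩ :=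
    (wellFounded_lt.onFun (f := colSet D)).has_min {c | D r c = true} ⟨c₀, h⟩
  exact ⟨c, hc, fun c' hlt hrc' => hmin c' hrc' hlt⟩

lemma exists_mem_JSet (h1 : Cond1 D) (r : Fin K) : ∃ c, r ∈ JSet D c :=
  exists_mem_JSet_of_eq_true (h1 r).choose_spec

lemma mem_colSet_iff_subset_of_mem_JSet (h5 : Cond5 D) {r : Fin K} {c : Fin N}
    (hr : r ∈ JSet D c) (c' : Fin N) : r ∈ colSet D c' ↔ colSet D c ⊆ colSet D c' := by
  refine ⟨fun hrc' => ?_, fun hsub => hsub hr.1⟩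
  rcases h5 c' c with h | h | h
  · exact (h.eq_or_ssubset.resolve_right fun hlt => hr.2 c' hlt hrc').ge
  · exact h
  · exact absurd h (Set.nonempty_iff_ne_empty.mp ⟨r, hrc', hr.1⟩)

lemma eq_of_mem_JSet (h3 : Cond3 D) (h5 : Cond5 D) {c : Fin N} {r₁ r₂ : Fin K}
    (hr₁ : r₁ ∈ JSet D c) (hr₂ : r₂ ∈ JSet D c) : r₁ = r₂ :=
  h3 r₁ r₂ fun c' => Bool.eq_iff_iff.mpr <|
    (mem_colSet_iff_subset_of_mem_JSet h5 hr₁ c').trans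
      (mem_colSet_iff_subset_of_mem_JSet h5 hr₂ c').symm

lemma mem_JSet_of_row_eq {r₁ r₂ : Fin K} (hrow : ∀ c, D r₁ c = D r₂ c) {c : Fin N}
    (hr₁ : r₁ ∈ JSet D c) : r₂ ∈ JSet D c := by
  have hrow : D r₁ = D r₂ := funext hrow
  simpa [JSet, colSet, hrow] using hr₁

lemma JSet_eq_of_colSet_eq {c₁ c₂ : Fin N} (h : colSet D c₁ = colSet D c₂) :
    JSet D c₁ = JSet D c₂ := by
  simp only [JSet, h]

lemma cond3_of_cond1_of_cond6 (h1 : Cond1 D) (h6 : Cond6 D) : Cond3 D := by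
  intro r₁ r₂ hrow
  obtain ⟨c, hc⟩ := exists_mem_JSet h1 r₁
  exact (h6 c).unique hc (mem_JSet_of_row_eq hrow hc)

end General

section Square

variable {n : ℕ} {D : Fin n → Fin n → Bool}

lemma cond4_of_cond1_of_cond6 (h1 : Cond1 D) (h6 : Cond6 D) : Cond4 D := by
  choose g hg using fun c => (h6 c).exists
  have g_surj : Function.Surjective g := fun r => by
    obtain ⟨c, hc⟩ := exists_mem_JSet h1 r
    exact ⟨c, (h6 c).unique (hg c) hc⟩
  intro c₁ c₂ hcol
  have hJ : JSet D c₁ = JSet D c₂ :=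
    JSet_eq_of_colSet_eq (Set.ext fun r => by simp [colSet, hcol r])
  exact Finite.injective_iff_surjective.mpr g_surj <| (h6 c₂).unique (hJ ▸ hg c₁) (hg c₂)

lemma cond6_of_cond1_of_cond3_of_cond5 (h1 : Cond1 D) (h3 : Cond3 D) (h5 : Cond5 D) :
    Cond6 D := by
  choose f hf using exists_mem_JSet h1
  have f_inj : Function.Injective f := fun r₁ r₂ heq =>
    eq_of_mem_JSet h3 h5 (hf r₁) (heq ▸ hf r₂)
  intro c
  obtain ⟨r, rfl⟩ := Finite.injective_iff_surjective.mp f_inj c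
  exact ⟨r, hf r, fun r' hr' => eq_of_mem_JSet h3 h5 hr' (hf r)⟩

end Square

/-- A binary `n × n` matrix satisfies `P₀ = {1°, 2°, 5°, 6°}` iff it
satisfies `P = {1°, 2°, 3°, 4°, 5°}`. -/
theorem condP0_iff_condP {n : ℕ} (D : Fin n → Fin n → Bool) :
    (Cond1 D ∧ Cond2 D ∧ Cond5 D ∧ Cond6 D) ↔ CondP D := by
  constructor
  · rintro ⟨h1, h2, h5, h6⟩
    exact ⟨h1, h2, cond3_of_cond1_of_cond6 h1 h6, cond4_of_cond1_of_cond6 h1 h6, h5⟩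
  · rintro ⟨h1, h2, h3, -, h5⟩
    exact ⟨h1, h2, h5, cond6_of_cond1_of_cond3_of_cond5 h1 h3 h5⟩
end

section
/- Let K < N and let D⁻ be a K×N binary matrix satisfying condition set P⁻ = {1°, 3°, 5°}. Then there exists an N×N binary matrix D satisfying condition set P = {1°, 2°, 3°, 4°, 5°} and an injection ι from the K row indices of D⁻ into the N row indices of D such that for every row r of D⁻ and every column c, D(ι(r), c) = D⁻(r, c). -/
/-! Order the columns by `x ≼ c` iff `S_x ⊊ S_c` with `S_x ≠ ∅` (an empty column below all others
would break the chain property), or `S_x = S_c` and `x ≤ c`. By 5° the columns above any `x` form a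
chain, so `E x c = [x ≼ c]` is the ancestor-or-self matrix of a forest on the columns and satisfies
`P`. Row `r` of `D⁻` is the row of `E` at the least column `c` whose set `S_c` is the smallest one
containing `r`, and by 3° distinct rows get distinct columns. -/

section ForestOrder

variable {N : ℕ} {E : Fin N → Fin N → Bool}

theorem condP_of_forestOrder (refl : ∀ x, E x x = true)
    (antisymm : ∀ x y, E x y = true → E y x = true → x = y)
    (trans : ∀ x y z, E x y = true → E y z = true → E x z = true)
    (chain : ∀ x a b, E x a = true → E x b = true → E a b = true ∨ E b a = true) :
    CondP E := by
  refine ⟨fun x => ⟨x, refl x⟩, fun c => ⟨c, refl c⟩,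
    fun x y hxy => antisymm x y ((hxy y).symm ▸ refl y) (hxy x ▸ refl x),
    fun a b hab => antisymm a b (hab a ▸ refl a) ((hab b).symm ▸ refl b), fun a b => ?_⟩
  by_cases hmeet : ∃ x, E x a = true ∧ E x b = true
  · obtain ⟨x, hxa, hxb⟩ := hmeet
    rcases chain x a b hxa hxb with hab | hba
    · exact Or.inl fun y hy => trans y a b hy hab
    · exact Or.inr (Or.inl fun y hy => trans y b a hy hba)
  · exact Or.inr (Or.inr (Set.eq_empty_of_forall_notMem fun x hx => hmeet ⟨x, hx⟩))

end ForestOrder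

section Completion

variable {K N : ℕ} (D : Fin K → Fin N → Bool)

open Classical in
noncomputable def forestCompletion : Fin N → Fin N → Bool := fun x c =>
  decide (((colSet D x).Nonempty ∧ colSet D x ⊂ colSet D c) ∨
    (colSet D x = colSet D c ∧ x ≤ c))

open Classical in
theorem forestCompletion_eq_true {x c : Fin N} :
    forestCompletion D x c = true ↔
      ((colSet D x).Nonempty ∧ colSet D x ⊂ colSet D c) ∨ (colSet D x = colSet D c ∧ x ≤ c) :=
  decide_eq_true_iff

theorem colSet_subset_of_forestCompletion {x c : Fin N} (h : forestCompletion D x c = true) :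
    colSet D x ⊆ colSet D c := by
  rcases (forestCompletion_eq_true D).1 h with ⟨-, hss⟩ | ⟨heq, -⟩
  exacts [hss.subset, heq.subset]

theorem forestCompletion_total_of_colSet_eq {a b : Fin N} (hab : colSet D a = colSet D b) :
    forestCompletion D a b = true ∨ forestCompletion D b a = true := by
  simp only [forestCompletion_eq_true]
  exact (le_total a b).imp (fun h => Or.inr ⟨hab, h⟩) (fun h => Or.inr ⟨hab.symm, h⟩)

theorem forestCompletion_total_of_subset {a b : Fin N} (ha : (colSet D a).Nonempty)
    (hab : colSet D a ⊆ colSet D b) :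
    forestCompletion D a b = true ∨ forestCompletion D b a = true := by
  rcases hab.eq_or_ssubset with heq | hss
  · exact forestCompletion_total_of_colSet_eq D heq
  · exact Or.inl ((forestCompletion_eq_true D).2 (Or.inl ⟨ha, hss⟩))

theorem condP_forestCompletion (h5 : Cond5 D) : CondP (forestCompletion D) := by
  refine condP_of_forestOrder (fun x => ?_) (fun x y => ?_) (fun x y z => ?_)
    (fun x a b hxa hxb => ?_)
  · exact (forestCompletion_eq_true D).2 (Or.inr ⟨rfl, le_rfl⟩)
  · simp only [forestCompletion_eq_true]
    rintro (⟨-, hxy⟩ | ⟨hxy, hle⟩) (⟨-, hyx⟩ | ⟨hyx, hge⟩)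
    exacts [(hxy.asymm hyx).elim, (hxy.ne hyx.symm).elim, (hyx.ne hxy.symm).elim,
      le_antisymm hle hge]
  · simp only [forestCompletion_eq_true]
    rintro (⟨hx, hxy⟩ | ⟨hxy, hle⟩) (⟨hy, hyz⟩ | ⟨hyz, hle'⟩)
    exacts [Or.inl ⟨hx, hxy.trans hyz⟩, Or.inl ⟨hx, hyz ▸ hxy⟩,
      Or.inl ⟨hxy ▸ hy, hxy ▸ hyz⟩, Or.inr ⟨hxy.trans hyz, hle.trans hle'⟩]
  · have hsa := colSet_subset_of_forestCompletion D hxa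
    have hsb := colSet_subset_of_forestCompletion D hxb
    by_cases hx : (colSet D x).Nonempty
    · rcases h5 a b with hab | hba | hdisj
      · exact forestCompletion_total_of_subset D (hx.mono hsa) hab
      · exact (forestCompletion_total_of_subset D (hx.mono hsb) hba).symm
      · obtain ⟨r, hr⟩ := hx
        exact (hdisj.subset ⟨hsa hr, hsb hr⟩).elim
    · have colSet_eq : ∀ c, forestCompletion D x c = true → colSet D x = colSet D c :=
        fun c hc => ((forestCompletion_eq_true D).1 hc).elim (fun h => (hx h.1).elim) And.left
      exact forestCompletion_total_of_colSet_eq D ((colSet_eq a hxa).symm.trans (colSet_eq b hxb))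

/-- `S_c` is the smallest column set containing row `r`. -/
def IsHomeColumn (r : Fin K) (c : Fin N) : Prop :=
  ∀ c', D r c' = true ↔ colSet D c ⊆ colSet D c'

theorem exists_isHomeColumn (h1 : Cond1 D) (h5 : Cond5 D) (r : Fin K) :
    ∃ c, IsHomeColumn D r c := by
  obtain ⟨c, hc, hmin⟩ := Finset.exists_min_image (Finset.univ.filter (D r · = true))
    (fun c => (colSet D c).ncard) (by obtain ⟨c, hc⟩ := h1 r; exact ⟨c, by simpa using hc⟩)
  simp only [Finset.mem_filter, Finset.mem_univ, true_and] at hc hmin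
  refine ⟨c, fun c' => ⟨fun hc' => ?_, fun hsub => hsub hc⟩⟩
  rcases h5 c c' with hsub | hsub | hdisj
  · exact hsub
  · exact (Set.eq_of_subset_of_ncard_le hsub (hmin c' hc') (Set.toFinite _)).ge
  · exact (hdisj.subset ⟨hc, hc'⟩).elim

theorem exists_least_isHomeColumn (h1 : Cond1 D) (h5 : Cond5 D) (r : Fin K) :
    ∃ c, IsHomeColumn D r c ∧ ∀ c', IsHomeColumn D r c' → c ≤ c' :=
  let homes : Set (Fin N) := {c | IsHomeColumn D r c}
  ⟨wellFounded_lt.min homes (exists_isHomeColumn D h1 h5 r), wellFounded_lt.min_mem homes _,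
    fun _ hc' => wellFounded_lt.min_le hc'⟩

theorem eq_of_isHomeColumn (h3 : Cond3 D) {r r' : Fin K} {c : Fin N}
    (hr : IsHomeColumn D r c) (hr' : IsHomeColumn D r' c) : r = r' :=
  h3 r r' fun c' => Bool.eq_iff_iff.2 ((hr c').trans (hr' c').symm)

theorem forestCompletion_apply_of_least_isHomeColumn {r : Fin K} {c : Fin N}
    (hc : IsHomeColumn D r c) (hleast : ∀ c', IsHomeColumn D r c' → c ≤ c') (c' : Fin N) :
    forestCompletion D c c' = D r c' := by
  rw [Bool.eq_iff_iff, forestCompletion_eq_true, hc c']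
  refine ⟨fun h => h.elim (fun h => h.2.subset) (fun h => h.1.subset), fun hsub => ?_⟩
  rcases hsub.eq_or_ssubset with heq | hss
  · exact Or.inr ⟨heq, hleast c' fun c'' => heq ▸ hc c''⟩
  · exact Or.inl ⟨⟨r, (hc c).2 subset_rfl⟩, hss⟩

end Completion

theorem condPminus_matrix_completion_general {K N : ℕ}
    (Dminus : Fin K → Fin N → Bool) (h : CondPminus Dminus) :
    ∃ (D : Fin N → Fin N → Bool) (ι : Fin K → Fin N),
      CondP D ∧ Function.Injective ι ∧
      ∀ (r : Fin K) (c : Fin N), D (ι r) c = Dminus r c := by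
  obtain ⟨h1, h3, h5⟩ := h
  choose ι hhome hleast using exists_least_isHomeColumn Dminus h1 h5
  refine ⟨forestCompletion Dminus, ι, condP_forestCompletion Dminus h5, fun r r' hrr' => ?_,
    fun r => forestCompletion_apply_of_least_isHomeColumn Dminus (hhome r) (hleast r)⟩
  exact eq_of_isHomeColumn Dminus h3 (hhome r) (hrr' ▸ hhome r')

/-- A `K × N` binary matrix satisfying `P⁻` (with `K < N`) can be
completed to an `N × N` binary matrix satisfying `P`. -/
theorem condPminus_matrix_completion {K N : ℕ} (hKN : K < N)
    (Dminus : Fin K → Fin N → Bool) (h : CondPminus Dminus) :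
    ∃ (D : Fin N → Fin N → Bool) (ι : Fin K → Fin N),
      CondP D ∧ Function.Injective ι ∧
      ∀ (r : Fin K) (c : Fin N), D (ι r) c = Dminus r c :=
  condPminus_matrix_completion_general Dminus h
end
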